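/- arXiv:1702.08783 — 2 statements merged into one kernel-verified Lean document; each statement's English description precedes it below -/
import Mathlib

section
/- Let z_1, ..., z_M be i.i.d. random variables, each the absolute value of a Gaussian random variable with mean 0 and variance 1/2 (i.e., folded normal with pdf f(x) = (2/√π) e^{-x²} for x ≥ 0). Then the CDF of Z = (z_1 + ... + z_M)² satisfies F_Z(z) = (2^M/π^{M/2}) · z^{M/2}/M! · (1 + o(1)) as z → 0⁺; in particular, F_Z(z) ≤ (2^M/π^{M/2}) · z^{M/2}/M! for all z ≥ 0. -/
/-!
Let `νₙ` be the product of `n` folded normal laws, so that `F t = ν_M {∑ xᵢ ≤ √t}`. Conditioning on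
one coordinate gives `νₙ₊₁ {∑ xᵢ ≤ s} = ∫₀ˢ κ e^{-c²} νₙ {∑ yᵢ ≤ s - c} dc` with `κ = 2/√π`.
Bounding `e^{-c²}` above by `1`, and below by `e^{-s²} e^{(s-c)²}` (because
`c² + (s-c)² ≤ s²` on `[0, s]`), induction on `n` gives
`e^{-s²} κⁿ sⁿ/n! ≤ νₙ {∑ xᵢ ≤ s} ≤ κⁿ sⁿ/n!`. At `s = √t` this squeezes `F t` between
`e^{-t}` and `1` times the claimed main term.
-/

open MeasureTheory ProbabilityTheory Real Filter Topology Set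

/-- The folded normal distribution with underlying variance `1/2`:
density `(2/√π) e^{-x²}` on `[0, ∞)`. -/
noncomputable def foldedNormal : Measure ℝ :=
  MeasureTheory.volume.withDensity fun x =>
    ENNReal.ofReal (Set.indicator (Set.Ici 0) (fun x => 2 / Real.sqrt π * Real.exp (-x ^ 2)) x)

lemma exp_neg_sq_add_le_mul {a b : ℝ} (ha : 0 ≤ a) (hb : 0 ≤ b) :
    exp (-(a + b) ^ 2) ≤ exp (-a ^ 2) * exp (-b ^ 2) := by
  rw [← exp_add]
  exact exp_le_exp.2 (by nlinarith [mul_nonneg ha hb])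

lemma tendsto_div_of_mul_le_of_le {α : Type*} {l : Filter α} {f g B : α → ℝ}
    (hg : Tendsto g l (𝓝 1)) (hB : ∀ᶠ t in l, 0 < B t) (hlower : ∀ᶠ t in l, g t * B t ≤ f t)
    (hupper : ∀ᶠ t in l, f t ≤ B t) :
    Tendsto (fun t => f t / B t) l (𝓝 1) :=
  tendsto_of_tendsto_of_tendsto_of_le_of_le' hg tendsto_const_nhds
    (by filter_upwards [hB, hlower] with t hBt ht using (le_div_iff₀ hBt).2 ht)
    (by filter_upwards [hB, hupper] with t hBt ht using (div_le_one hBt).2 ht)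

lemma measure_pi_sum_le_succ (μ : Measure ℝ) [SigmaFinite μ] (n : ℕ) (s : ℝ) :
    Measure.pi (fun _ : Fin (n + 1) => μ) {x | ∑ i, x i ≤ s}
      = ∫⁻ c, Measure.pi (fun _ : Fin n => μ) {y | ∑ i, y i ≤ s - c} ∂μ := by
  let e := MeasurableEquiv.piFinSuccAbove (fun _ : Fin (n + 1) => ℝ) 0
  have hT : MeasurableSet {p : ℝ × (Fin n → ℝ) | p.1 + ∑ i, p.2 i ≤ s} :=
    measurableSet_le (by fun_prop) measurable_const
  have hpre : {x : Fin (n + 1) → ℝ | ∑ i, x i ≤ s}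
      = e ⁻¹' {p : ℝ × (Fin n → ℝ) | p.1 + ∑ i, p.2 i ≤ s} := by
    ext x
    simp [e, Fin.sum_univ_succ, Fin.tail]
  rw [hpre, ← Measure.map_apply e.measurable hT,
    (measurePreserving_piFinSuccAbove (fun _ : Fin (n + 1) => μ) 0).map_eq,
    Measure.prod_apply hT]
  congr with c
  congr with y
  simp only [mem_preimage, mem_ofPred_eq, le_sub_iff_add_le']

lemma measurable_foldedNormal_density : Measurable fun x : ℝ =>
    ENNReal.ofReal (Set.indicator (Set.Ici 0) (fun x => 2 / Real.sqrt π * Real.exp (-x ^ 2)) x) :=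
  ENNReal.measurable_ofReal.comp (Measurable.indicator (by fun_prop) measurableSet_Ici)

lemma lintegral_foldedNormal (g : ℝ → ENNReal) :
    ∫⁻ x, g x ∂foldedNormal
      = ∫⁻ x in Ici 0, ENNReal.ofReal (2 / √π * exp (-x ^ 2)) * g x := by
  rw [foldedNormal, lintegral_withDensity_eq_lintegral_mul_non_measurable _
    measurable_foldedNormal_density (ae_of_all _ fun _ => ENNReal.ofReal_lt_top),
    ← lintegral_indicator measurableSet_Ici]
  congr 1 with x
  by_cases hx : x ∈ Ici (0 : ℝ) <;> simp [hx]

instance : IsProbabilityMeasure foldedNormal := by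
  constructor
  have hint : Integrable fun x : ℝ => 2 / √π * exp (-x ^ 2) := by
    simpa using (integrable_exp_neg_mul_sq one_pos).const_mul (2 / √π)
  have hgauss : ∫ x in Ioi (0 : ℝ), exp (-x ^ 2) = √π / 2 := by
    simpa using integral_gaussian_Ioi 1
  have hπ : √π ≠ 0 := by positivity
  simpa only [lintegral_const, mul_one, measure_univ, ← ofReal_integral_eq_lintegral_ofReal
    hint.integrableOn (ae_of_all _ fun _ => by positivity), integral_Ici_eq_integral_Ioi,
    integral_const_mul, hgauss, div_mul_div_cancel₀ hπ, div_self (two_ne_zero (α := ℝ)), one_mul,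
    ENNReal.ofReal_one] using lintegral_foldedNormal fun _ => 1

lemma ae_foldedNormal_nonneg : ∀ᵐ x ∂foldedNormal, 0 ≤ x := by
  rw [foldedNormal, ae_withDensity_iff measurable_foldedNormal_density]
  refine ae_of_all _ fun x hx => ?_
  by_contra hneg
  simp [indicator_of_notMem (show x ∉ Ici 0 from hneg)] at hx

noncomputable abbrev foldedNormalPi (n : ℕ) : Measure (Fin n → ℝ) :=
  Measure.pi fun _ => foldedNormal

lemma ae_foldedNormalPi_sum_nonneg (n : ℕ) : ∀ᵐ x ∂foldedNormalPi n, 0 ≤ ∑ i, x i :=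
  (eventually_pi fun _ => ae_foldedNormal_nonneg).filter_mono Measure.ae_pi_le_pi |>.mono
    fun _ hx => Finset.sum_nonneg fun i _ => hx i

lemma foldedNormalPi_sum_le_of_neg (n : ℕ) {s : ℝ} (hs : s < 0) :
    foldedNormalPi n {x | ∑ i, x i ≤ s} = 0 :=
  measure_eq_zero_iff_ae_notMem.2 <| (ae_foldedNormalPi_sum_nonneg n).mono
    fun _ hx hle => hs.not_ge (hx.trans hle)

lemma foldedNormalPi_succ_sum_le (n : ℕ) {s : ℝ} (hs : 0 ≤ s) :
    foldedNormalPi (n + 1) {x | ∑ i, x i ≤ s}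
      = ∫⁻ c in Icc 0 s, ENNReal.ofReal (2 / √π * exp (-c ^ 2))
          * foldedNormalPi n {y | ∑ i, y i ≤ s - c} := by
  rw [measure_pi_sum_le_succ, lintegral_foldedNormal, ← Icc_union_Ioi_eq_Ici hs,
    lintegral_union measurableSet_Ioi ((Iic_disjoint_Ioi le_rfl).mono_left Icc_subset_Iic_self),
    setLIntegral_congr_fun measurableSet_Ioi (g := fun _ => 0)
      fun c hc => by simp [foldedNormalPi_sum_le_of_neg n (sub_neg.2 hc)],
    lintegral_zero, add_zero]

/-- `(2/√π)^n` times the volume `s^n/n!` of the simplex `{x ≥ 0, ∑ xᵢ ≤ s}`. -/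
noncomputable def simplexBound (n : ℕ) (s : ℝ) : ℝ := (2 / √π) ^ n * s ^ n / n.factorial

lemma simplexBound_nonneg (n : ℕ) {s : ℝ} (hs : 0 ≤ s) : 0 ≤ simplexBound n s := by
  unfold simplexBound
  positivity

lemma setLIntegral_Icc_simplexBound (n : ℕ) {s K : ℝ} (hs : 0 ≤ s) (hK : 0 ≤ K) :
    ∫⁻ c in Icc 0 s, ENNReal.ofReal (K * (2 / √π) * simplexBound n (s - c))
      = ENNReal.ofReal (K * simplexBound (n + 1) s) := by
  rw [← ofReal_integral_eq_lintegral_ofReal]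
  · congr 1
    rw [integral_Icc_eq_integral_Ioc, ← intervalIntegral.integral_of_le hs,
      intervalIntegral.integral_comp_sub_left (fun u => K * (2 / √π) * simplexBound n u) s]
    have : √π ≠ 0 := by positivity
    simp only [simplexBound, div_pow, sub_self, sub_zero, intervalIntegral.integral_const_mul,
      intervalIntegral.integral_div, integral_pow, ne_eq, Nat.add_eq_zero_iff, one_ne_zero,
      and_false, not_false_eq_true, zero_pow, Nat.factorial_succ, Nat.cast_mul, Nat.cast_add,
      Nat.cast_one]
    field_simp
    ring
  · exact (by unfold simplexBound; fun_prop : Continuous _).integrableOn_Icc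
  · filter_upwards [ae_restrict_mem measurableSet_Icc] with c hc
    have := simplexBound_nonneg n (sub_nonneg.2 hc.2)
    positivity

lemma foldedNormalPi_sum_le_le_simplexBound (n : ℕ) {s : ℝ} (hs : 0 ≤ s) :
    foldedNormalPi n {x | ∑ i, x i ≤ s} ≤ ENNReal.ofReal (simplexBound n s) := by
  induction n generalizing s with
  | zero => simp [simplexBound, hs]
  | succ n ih =>
    rw [foldedNormalPi_succ_sum_le n hs, ← one_mul (simplexBound _ _),
      ← setLIntegral_Icc_simplexBound n hs zero_le_one]
    refine setLIntegral_mono' measurableSet_Icc fun c hc => ?_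
    calc _ ≤ ENNReal.ofReal (2 / √π) * ENNReal.ofReal (simplexBound n (s - c)) := by
          gcongr
          · exact mul_le_of_le_one_right (by positivity) (exp_le_one_iff.2 (by nlinarith))
          · exact ih (sub_nonneg.2 hc.2)
      _ = _ := by rw [one_mul, ENNReal.ofReal_mul (by positivity)]

lemma ofReal_exp_mul_simplexBound_le_foldedNormalPi (n : ℕ) {s : ℝ} (hs : 0 ≤ s) :
    ENNReal.ofReal (exp (-s ^ 2) * simplexBound n s) ≤ foldedNormalPi n {x | ∑ i, x i ≤ s} := by
  induction n generalizing s with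
  | zero => simp [simplexBound, hs]
  | succ n ih =>
    rw [foldedNormalPi_succ_sum_le n hs, ← setLIntegral_Icc_simplexBound n hs (exp_pos _).le]
    refine setLIntegral_mono' measurableSet_Icc fun c hc => ?_
    have hsc : 0 ≤ s - c := sub_nonneg.2 hc.2
    have hB := simplexBound_nonneg n hsc
    have hexp := exp_neg_sq_add_le_mul hc.1 hsc
    rw [add_sub_cancel] at hexp
    calc ENNReal.ofReal (exp (-s ^ 2) * (2 / √π) * simplexBound n (s - c))
        ≤ ENNReal.ofReal (2 / √π * exp (-c ^ 2)
            * (exp (-(s - c) ^ 2) * simplexBound n (s - c))) := by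
          apply ENNReal.ofReal_le_ofReal
          have hκB : 0 ≤ 2 / √π * simplexBound n (s - c) := by positivity
          linarith [mul_le_mul_of_nonneg_left hexp hκB]
      _ ≤ _ := by
          rw [ENNReal.ofReal_mul (by positivity)]
          gcongr
          exact ih hsc

lemma foldedNormalPi_sum_sq_le (n : ℕ) {t : ℝ} (ht : 0 ≤ t) :
    foldedNormalPi n {x | (∑ i, x i) ^ 2 ≤ t} = foldedNormalPi n {x | ∑ i, x i ≤ √t} :=
  measure_congr <| eventuallyEq_set.2 <| (ae_foldedNormalPi_sum_nonneg n).mono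
    fun _ hx => (le_sqrt hx ht).symm

lemma measure_sum_sq_le_eq_foldedNormalPi {Ω : Type*} [MeasurableSpace Ω] {P : Measure Ω}
    {M : ℕ} {z : Fin M → Ω → ℝ} (hmeas : ∀ m, Measurable (z m)) (hindep : iIndepFun z P)
    (hlaw : ∀ m, P.map (z m) = foldedNormal) {t : ℝ} (ht : 0 ≤ t) :
    P {ω | (∑ m, z m ω) ^ 2 ≤ t} = foldedNormalPi M {x | ∑ i, x i ≤ √t} := by
  have hjoint : P.map (fun ω i => z i ω) = foldedNormalPi M := by
    simp_rw [hindep.map_fun_eq_pi_map fun i => (hmeas i).aemeasurable, hlaw]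
  rw [← foldedNormalPi_sum_sq_le M ht, ← hjoint,
    Measure.map_apply (by fun_prop) (measurableSet_le (by fun_prop) measurable_const)]
  rfl

lemma simplexBound_sqrt (n : ℕ) {t : ℝ} (ht : 0 ≤ t) :
    simplexBound n √t = 2 ^ n / π ^ ((n : ℝ) / 2) * t ^ ((n : ℝ) / 2) / n.factorial := by
  rw [rpow_div_two_eq_sqrt _ ht, rpow_div_two_eq_sqrt _ pi_pos.le, rpow_natCast, rpow_natCast,
    simplexBound, div_pow]

theorem stmt_0_general {Ω : Type*} [MeasurableSpace Ω] (P : Measure Ω)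
    (M : ℕ) (z : Fin M → Ω → ℝ)
    (hmeas : ∀ m, Measurable (z m))
    (hindep : iIndepFun z P)
    (hlaw : ∀ m, P.map (z m) = foldedNormal)
    (F : ℝ → ℝ) (hF : ∀ t, F t = (P {ω | (∑ m, z m ω) ^ 2 ≤ t}).toReal) :
    Tendsto (fun t : ℝ =>
        F t / (2 ^ M / π ^ ((M : ℝ) / 2) * t ^ ((M : ℝ) / 2) / (Nat.factorial M)))
      (𝓝[>] 0) (𝓝 1) ∧
    ∀ t : ℝ, 0 ≤ t →
      F t ≤ 2 ^ M / π ^ ((M : ℝ) / 2) * t ^ ((M : ℝ) / 2) / (Nat.factorial M) := by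
  have hF_pi (t : ℝ) (ht : 0 ≤ t) : F t = (foldedNormalPi M {x | ∑ i, x i ≤ √t}).toReal := by
    rw [hF, measure_sum_sq_le_eq_foldedNormalPi hmeas hindep hlaw ht]
  have hupper (t : ℝ) (ht : 0 ≤ t) : F t ≤ simplexBound M √t := by
    rw [hF_pi t ht]
    exact ENNReal.toReal_le_of_le_ofReal (simplexBound_nonneg M (sqrt_nonneg t))
      (foldedNormalPi_sum_le_le_simplexBound M (sqrt_nonneg t))
  have hlower (t : ℝ) (ht : 0 ≤ t) : exp (-t) * simplexBound M √t ≤ F t := by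
    rw [hF_pi t ht, ← ENNReal.ofReal_le_iff_le_toReal (measure_ne_top _ _)]
    simpa [sq_sqrt ht] using ofReal_exp_mul_simplexBound_le_foldedNormalPi M (sqrt_nonneg t)
  have hexp : Tendsto (fun t : ℝ => exp (-t)) (𝓝[>] 0) (𝓝 1) :=
    ((continuous_exp.comp continuous_neg).tendsto' 0 1 (by simp)).mono_left nhdsWithin_le_nhds
  have hlimit : Tendsto (fun t => F t / simplexBound M √t) (𝓝[>] 0) (𝓝 1) := by
    refine tendsto_div_of_mul_le_of_le hexp ?_ ?_ ?_ <;>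
      filter_upwards [self_mem_nhdsWithin] with t (ht : 0 < t)
    · unfold simplexBound; positivity
    · exact hlower t ht.le
    · exact hupper t ht.le
  refine ⟨hlimit.congr' ?_, fun t ht => simplexBound_sqrt M ht ▸ hupper t ht⟩
  filter_upwards [self_mem_nhdsWithin] with t (ht : 0 < t)
  rw [simplexBound_sqrt M ht.le]

theorem stmt_0 {Ω : Type*} [MeasurableSpace Ω] (P : Measure Ω) [IsProbabilityMeasure P]
    (M : ℕ) (hM : 1 ≤ M) (z : Fin M → Ω → ℝ)
    (hmeas : ∀ m, Measurable (z m))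
    (hindep : iIndepFun z P)
    (hlaw : ∀ m, P.map (z m) = foldedNormal)
    (F : ℝ → ℝ) (hF : ∀ t, F t = (P {ω | (∑ m, z m ω) ^ 2 ≤ t}).toReal) :
    Tendsto (fun t : ℝ =>
        F t / (2 ^ M / π ^ ((M : ℝ) / 2) * t ^ ((M : ℝ) / 2) / (Nat.factorial M)))
      (𝓝[>] 0) (𝓝 1) ∧
    ∀ t : ℝ, 0 ≤ t →
      F t ≤ 2 ^ M / π ^ ((M : ℝ) / 2) * t ^ ((M : ℝ) / 2) / (Nat.factorial M) :=
  stmt_0_general P M z hmeas hindep hlaw F hF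
end

section
/- Let X and Z be independent nonnegative random variables whose CDFs satisfy F_X(x) = A x^{a}(1+o(1)) and F_Z(z) = B z^{b}(1+o(1)) as the arguments tend to 0⁺, with A, B, a, b > 0. Then the CDF of X + Z satisfies F_{X+Z}(y) = A B a · Beta(b+1, a) · y^{a+b} (1+o(1)) as y → 0⁺, where Beta is the Beta function. -/
open MeasureTheory ProbabilityTheory Real Filter Topology Set
open scoped ENNReal

/-- The Beta function `B(p, q) = Γ(p)Γ(q)/Γ(p+q)`. -/
noncomputable def betaFn (p q : ℝ) : ℝ := Real.Gamma p * Real.Gamma q / Real.Gamma (p + q)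

/-!
By independence, `P(X + Z ≤ y) = ∫_{[0,y]} F_X(y - z) dF_Z(z)`. Squeezing `F_X` between
`(1 ± ε) A t^a` reduces this to `(1 ± ε) A ∫_{[0,y]} (y - z)^a dF_Z(z)`, and the layer-cake
formula turns that integral into `∫_0^y a t^(a-1) F_Z(y - t) dt`. Squeezing `F_Z` between
`(1 ± ε) B t^b` leaves the Beta integral `∫_0^y a t^(a-1) (y - t)^b dt = a B(b+1, a) y^(a+b)`,
so for small `y` the ratio in the theorem lies between `(1 - ε)²` and `(1 + ε)²`.
-/

lemma betaFn_pos {p q : ℝ} (hp : 0 < p) (hq : 0 < q) : 0 < betaFn p q := by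
  have := Gamma_pos_of_pos hp
  have := Gamma_pos_of_pos hq
  have := Gamma_pos_of_pos (add_pos hp hq)
  unfold betaFn
  positivity

lemma betaFn_comm (p q : ℝ) : betaFn p q = betaFn q p := by
  rw [betaFn, betaFn, mul_comm, add_comm]

lemma Complex.betaIntegral_ofReal_eq_betaFn {p q : ℝ} (hp : 0 < p) (hq : 0 < q) :
    Complex.betaIntegral p q = betaFn p q := by
  have hΓ : Complex.Gamma (p + q) ≠ 0 := by
    rw [← Complex.ofReal_add, Complex.Gamma_ofReal]
    exact_mod_cast (Gamma_pos_of_pos (add_pos hp hq)).ne'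
  rw [betaFn, Complex.ofReal_div, Complex.ofReal_mul, ← Complex.Gamma_ofReal,
    ← Complex.Gamma_ofReal, ← Complex.Gamma_ofReal, Complex.ofReal_add, eq_div_iff hΓ, mul_comm,
    Complex.Gamma_mul_Gamma_eq_betaIntegral (by simpa) (by simpa)]

lemma integral_rpow_mul_sub_rpow {p q y : ℝ} (hp : 0 < p) (hq : 0 < q) (hy : 0 < y) :
    ∫ x in 0..y, x ^ (p - 1) * (y - x) ^ (q - 1) = y ^ (p + q - 1) * betaFn p q := by
  have h := Complex.betaIntegral_scaled p q hy
  rw [Complex.betaIntegral_ofReal_eq_betaFn hp hq] at h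
  have hL : ∫ x in 0..y, (x : ℂ) ^ ((p : ℂ) - 1) * ((y : ℂ) - x) ^ ((q : ℂ) - 1) =
      ((∫ x in 0..y, x ^ (p - 1) * (y - x) ^ (q - 1) : ℝ) : ℂ) := by
    rw [← intervalIntegral.integral_ofReal]
    refine intervalIntegral.integral_congr fun x hx => ?_
    rw [uIcc_of_le hy.le] at hx
    rw [Complex.ofReal_mul, Complex.ofReal_cpow hx.1, Complex.ofReal_cpow (sub_nonneg.2 hx.2)]
    push_cast
    rfl
  rw [hL, show (p + q - 1 : ℂ) = ((p + q - 1 : ℝ) : ℂ) by push_cast; rfl,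
    ← Complex.ofReal_cpow hy.le] at h
  exact_mod_cast h

lemma setLIntegral_Ioc_rpow_sub_mul_rpow {a b y : ℝ} (ha : 0 < a) (hb : 0 < b) (hy : 0 < y) :
    ∫⁻ t in Ioc 0 y, ENNReal.ofReal ((y - t) ^ b) * ENNReal.ofReal (a * t ^ (a - 1)) =
      ENNReal.ofReal (a * betaFn (b + 1) a * y ^ (a + b)) := by
  have hint : IntervalIntegrable (fun t => a * (t ^ (a - 1) * (y - t) ^ b)) volume 0 y := by
    refine IntervalIntegrable.const_mul ?_ a
    refine (intervalIntegral.intervalIntegrable_rpow' (by linarith)).mul_continuousOn ?_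
    exact fun t _ => (continuousAt_const.sub continuousAt_id).rpow_const (Or.inr hb.le)
      |>.continuousWithinAt
  calc ∫⁻ t in Ioc 0 y, ENNReal.ofReal ((y - t) ^ b) * ENNReal.ofReal (a * t ^ (a - 1))
      = ∫⁻ t in Ioc 0 y, ENNReal.ofReal (a * (t ^ (a - 1) * (y - t) ^ b)) := by
        refine setLIntegral_congr_fun measurableSet_Ioc fun t ht => ?_
        rw [← ENNReal.ofReal_mul (rpow_nonneg (sub_nonneg.2 ht.2) b)]
        ring_nf
    _ = ENNReal.ofReal (∫ t in 0..y, a * (t ^ (a - 1) * (y - t) ^ b)) := by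
        rw [intervalIntegral.integral_of_le hy.le, ofReal_integral_eq_lintegral_ofReal
          ((intervalIntegrable_iff_integrableOn_Ioc_of_le hy.le).1 hint)]
        filter_upwards [ae_restrict_mem measurableSet_Ioc] with t ht
        have := rpow_nonneg (sub_nonneg.2 ht.2) b
        have := rpow_nonneg ht.1.le (a - 1)
        positivity
    _ = ENNReal.ofReal (a * betaFn (b + 1) a * y ^ (a + b)) := by
        have h := integral_rpow_mul_sub_rpow ha (by linarith : 0 < b + 1) hy
        rw [add_sub_cancel_right, ← add_assoc, add_sub_cancel_right] at h
        rw [intervalIntegral.integral_const_mul, h, betaFn_comm]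
        ring_nf

lemma setLIntegral_Icc_rpow_sub (ν : Measure ℝ) {a : ℝ} (ha : 0 < a) (y : ℝ) :
    ∫⁻ z in Icc 0 y, ENNReal.ofReal ((y - z) ^ a) ∂ν =
      ∫⁻ t in Ioc 0 y, ν (Icc 0 (y - t)) * ENNReal.ofReal (a * t ^ (a - 1)) := by
  have hprim : ∀ u : ℝ, ∫ t in 0..u, a * t ^ (a - 1) = u ^ a := fun u => by
    rw [intervalIntegral.integral_const_mul, integral_rpow (Or.inl (by linarith)),
      sub_add_cancel, zero_rpow ha.ne', sub_zero, mul_div_cancel₀ _ ha.ne']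
  have hlevel : ∀ t : ℝ, 0 ≤ t → {z | t ≤ y - z} ∩ Icc 0 y = Icc 0 (y - t) := fun t ht => by
    ext z
    simp only [mem_inter_iff, mem_ofPred_eq, mem_Icc]
    constructor
    · rintro ⟨h₁, h₂, -⟩
      exact ⟨h₂, by linarith⟩
    · rintro ⟨h₁, h₂⟩
      exact ⟨by linarith, h₁, by linarith⟩
  have layer := lintegral_comp_eq_lintegral_meas_le_mul (ν.restrict (Icc 0 y))
    (f := fun z => y - z) (g := fun t => a * t ^ (a - 1))
    ((ae_restrict_mem measurableSet_Icc).mono fun z hz => sub_nonneg.2 hz.2)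
    (by fun_prop)
    (fun t _ => (intervalIntegral.intervalIntegrable_rpow' (by linarith)).const_mul a)
    (by
      filter_upwards [ae_restrict_mem measurableSet_Ioi] with t (ht : 0 < t)
      positivity)
  simp only [hprim] at layer
  rw [layer, ← Iic_inter_Ioi, ← Measure.restrict_restrict measurableSet_Iic,
    ← lintegral_indicator measurableSet_Iic]
  refine setLIntegral_congr_fun measurableSet_Ioi fun t (ht : 0 < t) => ?_
  rw [Measure.restrict_apply (measurableSet_le measurable_const (by fun_prop)), hlevel t ht.le]
  by_cases hty : t ≤ y
  · rw [indicator_of_mem (mem_Iic.2 hty)]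
  · rw [indicator_of_notMem (mt mem_Iic.1 hty), Icc_eq_empty (by linarith), measure_empty,
      zero_mul]

lemma measure_Icc_zero_eq_measure_Iic {μ : Measure ℝ} (hμ : ∀ᵐ x ∂μ, 0 ≤ x) (t : ℝ) :
    μ (Icc 0 t) = μ (Iic t) := by
  have hneg : μ (Ici 0)ᶜ = 0 := by simpa [ae_iff, compl_Ici, Iio_def] using hμ
  rw [← Ici_inter_Iic, inter_comm, measure_inter_conull hneg]

lemma conv_Iic_eq_lintegral (μ ν : Measure ℝ) [SFinite μ] [SFinite ν] (y : ℝ) :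
    (μ ∗ ν) (Iic y) = ∫⁻ z, μ (Iic (y - z)) ∂ν := by
  have hs : MeasurableSet ((fun p : ℝ × ℝ => p.1 + p.2) ⁻¹' Iic y) :=
    measurable_add measurableSet_Iic
  rw [Measure.conv, Measure.map_apply measurable_add measurableSet_Iic, Measure.prod_apply_symm hs]
  congr! with z
  ext x
  simp [le_sub_iff_add_le]

lemma conv_Iic_eq_setLIntegral_Icc {μ ν : Measure ℝ} [SFinite μ] [SFinite ν]
    (hμ : ∀ᵐ x ∂μ, 0 ≤ x) (hν : ∀ᵐ z ∂ν, 0 ≤ z) (y : ℝ) :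
    (μ ∗ ν) (Iic y) = ∫⁻ z in Icc 0 y, μ (Iic (y - z)) ∂ν := by
  rw [conv_Iic_eq_lintegral, ← lintegral_indicator measurableSet_Icc]
  refine lintegral_congr_ae (hν.mono fun z hz => ?_)
  by_cases hzy : z ≤ y
  · rw [indicator_of_mem (mem_Icc.2 ⟨hz, hzy⟩)]
  · rw [indicator_of_notMem fun h => hzy h.2]
    dsimp only
    rw [← measure_Icc_zero_eq_measure_Iic hμ,
      Icc_eq_empty (by linarith), measure_empty]

section ConvolutionBounds

variable {μ ν : Measure ℝ} [SFinite μ] [SFinite ν] {a b c d y : ℝ}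

lemma conv_Iic_le (hμ0 : ∀ᵐ x ∂μ, 0 ≤ x) (hν0 : ∀ᵐ z ∂ν, 0 ≤ z) (ha : 0 < a) (hb : 0 < b)
    (hc : 0 ≤ c) (hd : 0 ≤ d) (hy : 0 < y)
    (hμ : ∀ t ∈ Icc 0 y, μ (Iic t) ≤ ENNReal.ofReal (c * t ^ a))
    (hν : ∀ t ∈ Icc 0 y, ν (Iic t) ≤ ENNReal.ofReal (d * t ^ b)) :
    (μ ∗ ν) (Iic y) ≤ ENNReal.ofReal (c * d * (a * betaFn (b + 1) a * y ^ (a + b))) := by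
  calc (μ ∗ ν) (Iic y)
      = ∫⁻ z in Icc 0 y, μ (Iic (y - z)) ∂ν := conv_Iic_eq_setLIntegral_Icc hμ0 hν0 y
    _ ≤ ∫⁻ z in Icc 0 y, ENNReal.ofReal c * ENNReal.ofReal ((y - z) ^ a) ∂ν :=
        setLIntegral_mono' measurableSet_Icc fun z hz => by
          rw [← ENNReal.ofReal_mul hc]
          exact hμ _ ⟨sub_nonneg.2 hz.2, by linarith [hz.1]⟩
    _ = ENNReal.ofReal c *
          ∫⁻ t in Ioc 0 y, ν (Icc 0 (y - t)) * ENNReal.ofReal (a * t ^ (a - 1)) := by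
        rw [lintegral_const_mul' _ _ ENNReal.ofReal_ne_top, setLIntegral_Icc_rpow_sub ν ha]
    _ ≤ ENNReal.ofReal c * ∫⁻ t in Ioc 0 y,
          ENNReal.ofReal d *
            (ENNReal.ofReal ((y - t) ^ b) * ENNReal.ofReal (a * t ^ (a - 1))) := by
        refine mul_le_mul_right (setLIntegral_mono' measurableSet_Ioc fun t ht => ?_) _
        rw [← mul_assoc, ← ENNReal.ofReal_mul hd, measure_Icc_zero_eq_measure_Iic hν0]
        gcongr ?_ * _
        exact hν _ ⟨sub_nonneg.2 ht.2, by linarith [ht.1]⟩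
    _ = ENNReal.ofReal (c * d * (a * betaFn (b + 1) a * y ^ (a + b))) := by
        rw [lintegral_const_mul' _ _ ENNReal.ofReal_ne_top,
          setLIntegral_Ioc_rpow_sub_mul_rpow ha hb hy, ← ENNReal.ofReal_mul hd,
          ← ENNReal.ofReal_mul hc]
        ring_nf

lemma le_conv_Iic (hμ0 : ∀ᵐ x ∂μ, 0 ≤ x) (hν0 : ∀ᵐ z ∂ν, 0 ≤ z) (ha : 0 < a) (hb : 0 < b)
    (hc : 0 ≤ c) (hd : 0 ≤ d) (hy : 0 < y)
    (hμ : ∀ t ∈ Icc 0 y, ENNReal.ofReal (c * t ^ a) ≤ μ (Iic t))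
    (hν : ∀ t ∈ Icc 0 y, ENNReal.ofReal (d * t ^ b) ≤ ν (Iic t)) :
    ENNReal.ofReal (c * d * (a * betaFn (b + 1) a * y ^ (a + b))) ≤ (μ ∗ ν) (Iic y) := by
  calc ENNReal.ofReal (c * d * (a * betaFn (b + 1) a * y ^ (a + b)))
      = ENNReal.ofReal c * ∫⁻ t in Ioc 0 y,
          ENNReal.ofReal d *
            (ENNReal.ofReal ((y - t) ^ b) * ENNReal.ofReal (a * t ^ (a - 1))) := by
        rw [lintegral_const_mul' _ _ ENNReal.ofReal_ne_top,
          setLIntegral_Ioc_rpow_sub_mul_rpow ha hb hy, ← ENNReal.ofReal_mul hd,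
          ← ENNReal.ofReal_mul hc]
        ring_nf
    _ ≤ ENNReal.ofReal c *
          ∫⁻ t in Ioc 0 y, ν (Icc 0 (y - t)) * ENNReal.ofReal (a * t ^ (a - 1)) := by
        refine mul_le_mul_right (setLIntegral_mono' measurableSet_Ioc fun t ht => ?_) _
        rw [← mul_assoc, ← ENNReal.ofReal_mul hd, measure_Icc_zero_eq_measure_Iic hν0]
        gcongr ?_ * _
        exact hν _ ⟨sub_nonneg.2 ht.2, by linarith [ht.1]⟩
    _ = ∫⁻ z in Icc 0 y, ENNReal.ofReal c * ENNReal.ofReal ((y - z) ^ a) ∂ν := by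
        rw [lintegral_const_mul' _ _ ENNReal.ofReal_ne_top, setLIntegral_Icc_rpow_sub ν ha]
    _ ≤ ∫⁻ z in Icc 0 y, μ (Iic (y - z)) ∂ν :=
        setLIntegral_mono' measurableSet_Icc fun z hz => by
          rw [← ENNReal.ofReal_mul hc]
          exact hμ _ ⟨sub_nonneg.2 hz.2, by linarith [hz.1]⟩
    _ = (μ ∗ ν) (Iic y) := (conv_Iic_eq_setLIntegral_Icc hμ0 hν0 y).symm

end ConvolutionBounds

section PowerLaw

variable {μ : Measure ℝ} [IsFiniteMeasure μ] {A a : ℝ}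

lemma measure_Iic_zero_of_tendsto (hA : 0 < A) (ha : 0 < a)
    (h : Tendsto (fun t => (μ (Iic t)).toReal / (A * t ^ a)) (𝓝[>] 0) (𝓝 1)) :
    μ (Iic 0) = 0 := by
  have hpow : Tendsto (fun t : ℝ => A * t ^ a) (𝓝[>] 0) (𝓝 0) := by
    simpa [zero_rpow ha.ne'] using
      ((continuous_rpow_const ha.le).tendsto 0).mono_left nhdsWithin_le_nhds |>.const_mul A
  have hcdf : Tendsto (fun t => (μ (Iic t)).toReal) (𝓝[>] 0) (𝓝 0) := by
    have hcancel : (fun t => (μ (Iic t)).toReal / (A * t ^ a) * (A * t ^ a))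
        =ᶠ[𝓝[>] 0] fun t => (μ (Iic t)).toReal := by
      filter_upwards [self_mem_nhdsWithin] with t (ht : 0 < t)
      exact div_mul_cancel₀ _ (by positivity)
    simpa using (h.mul hpow).congr' hcancel
  have hle : (μ (Iic 0)).toReal ≤ 0 := ge_of_tendsto hcdf <|
    eventually_nhdsWithin_of_forall fun t (ht : 0 < t) =>
      ENNReal.toReal_mono (measure_ne_top _ _) (measure_mono (Iic_subset_Iic.2 ht.le))
  exact (ENNReal.toReal_eq_zero_iff _).1 (hle.antisymm ENNReal.toReal_nonneg) |>.resolve_right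
    (measure_ne_top _ _)

lemma eventually_forall_measure_Iic_bounds (hA : 0 < A) (ha : 0 < a)
    (h : Tendsto (fun t => (μ (Iic t)).toReal / (A * t ^ a)) (𝓝[>] 0) (𝓝 1))
    {ε : ℝ} (hε : 0 < ε) :
    ∀ᶠ y in 𝓝[>] 0, ∀ t ∈ Icc 0 y,
      ENNReal.ofReal ((1 - ε) * A * t ^ a) ≤ μ (Iic t) ∧
        μ (Iic t) ≤ ENNReal.ofReal ((1 + ε) * A * t ^ a) := by
  obtain ⟨δ, hδ, hratio⟩ := mem_nhdsGT_iff_exists_Ioo_subset.1 <|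
    h (Ioo_mem_nhds (by linarith : 1 - ε < 1) (by linarith : (1 : ℝ) < 1 + ε))
  filter_upwards [Ioo_mem_nhdsGT hδ] with y hy t ht
  rcases ht.1.eq_or_lt with rfl | htpos
  · simp [measure_Iic_zero_of_tendsto hA ha h, zero_rpow ha.ne']
  have hD : 0 < A * t ^ a := by positivity
  obtain ⟨hlo, hhi⟩ := hratio ⟨htpos, ht.2.trans_lt hy.2⟩
  rw [lt_div_iff₀ hD] at hlo
  rw [div_lt_iff₀ hD] at hhi
  constructor
  · exact ENNReal.ofReal_le_of_le_toReal (by linarith)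
  · exact (ENNReal.le_ofReal_iff_toReal_le (measure_ne_top _ _) (by positivity)).2 (by linarith)

end PowerLaw

lemma tendsto_toReal_div_of_forall_eventually_bounds {α : Type*} {l : Filter α}
    {m : α → ℝ≥0∞} {D : α → ℝ} (hD : ∀ᶠ y in l, 0 < D y)
    (h : ∀ ε, 0 < ε → ε < 1 → ∀ᶠ y in l,
      ENNReal.ofReal ((1 - ε) ^ 2 * D y) ≤ m y ∧ m y ≤ ENNReal.ofReal ((1 + ε) ^ 2 * D y)) :
    Tendsto (fun y => (m y).toReal / D y) l (𝓝 1) := by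
  refine Metric.tendsto_nhds.2 fun ε hε => ?_
  set η := min (ε / 4) (1 / 2)
  have hη : 0 < η := lt_min (by positivity) (by norm_num)
  have hηε : η ≤ ε / 4 := min_le_left _ _
  have hη1 : η ≤ 1 / 2 := min_le_right _ _
  filter_upwards [hD, h η hη (by linarith)] with y hDy ⟨hlo, hhi⟩
  have hm : m y ≠ ⊤ := ne_top_of_le_ne_top ENNReal.ofReal_ne_top hhi
  have hlo' := (div_le_div_iff_of_pos_right hDy).2 <|
    (ENNReal.ofReal_le_iff_le_toReal hm).1 hlo
  have hhi' := (div_le_div_iff_of_pos_right hDy).2 <|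
    ENNReal.toReal_le_of_le_ofReal (by positivity) hhi
  rw [mul_div_cancel_right₀ _ hDy.ne'] at hlo' hhi'
  rw [Real.dist_eq, abs_sub_lt_iff]
  constructor <;> nlinarith

theorem tendsto_conv_Iic_div_rpow {μ ν : Measure ℝ} [IsFiniteMeasure μ] [IsFiniteMeasure ν]
    (hμ0 : ∀ᵐ x ∂μ, 0 ≤ x) (hν0 : ∀ᵐ z ∂ν, 0 ≤ z) {A B a b : ℝ}
    (hA : 0 < A) (hB : 0 < B) (ha : 0 < a) (hb : 0 < b)
    (hμ : Tendsto (fun t => (μ (Iic t)).toReal / (A * t ^ a)) (𝓝[>] 0) (𝓝 1))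
    (hν : Tendsto (fun t => (ν (Iic t)).toReal / (B * t ^ b)) (𝓝[>] 0) (𝓝 1)) :
    Tendsto (fun y => ((μ ∗ ν) (Iic y)).toReal / (A * B * a * betaFn (b + 1) a * y ^ (a + b)))
      (𝓝[>] 0) (𝓝 1) := by
  have hβ := betaFn_pos (by linarith : 0 < b + 1) ha
  refine tendsto_toReal_div_of_forall_eventually_bounds
    (eventually_nhdsWithin_of_forall fun y (hy : 0 < y) => by positivity) fun ε hε hε1 => ?_
  filter_upwards [eventually_forall_measure_Iic_bounds hA ha hμ hε,
    eventually_forall_measure_Iic_bounds hB hb hν hε, self_mem_nhdsWithin]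
    with y hμy hνy (hy : 0 < y)
  constructor
  · convert le_conv_Iic hμ0 hν0 ha hb (by nlinarith) (by nlinarith) hy
      (fun t ht => (hμy t ht).1) (fun t ht => (hνy t ht).1) using 2
    ring
  · convert conv_Iic_le hμ0 hν0 ha hb (by nlinarith) (by nlinarith) hy
      (fun t ht => (hμy t ht).2) (fun t ht => (hνy t ht).2) using 2
    ring

theorem stmt_8 {Ω : Type*} [MeasurableSpace Ω] (P : Measure Ω) [IsProbabilityMeasure P]
    (X Z : Ω → ℝ) (hXmeas : Measurable X) (hZmeas : Measurable Z)
    (hX0 : ∀ ω, 0 ≤ X ω) (hZ0 : ∀ ω, 0 ≤ Z ω)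
    (hindep : IndepFun X Z P)
    (A B a b : ℝ) (hA : 0 < A) (hB : 0 < B) (ha : 0 < a) (hb : 0 < b)
    (hFX : Tendsto (fun x : ℝ => (P {ω | X ω ≤ x}).toReal / (A * x ^ a)) (𝓝[>] 0) (𝓝 1))
    (hFZ : Tendsto (fun z : ℝ => (P {ω | Z ω ≤ z}).toReal / (B * z ^ b)) (𝓝[>] 0) (𝓝 1)) :
    Tendsto (fun y : ℝ =>
        (P {ω | X ω + Z ω ≤ y}).toReal / (A * B * a * betaFn (b + 1) a * y ^ (a + b)))
      (𝓝[>] 0) (𝓝 1) := by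
  have hlaw : ∀ {W : Ω → ℝ}, Measurable W → ∀ x, P.map W (Iic x) = P {ω | W ω ≤ x} :=
    fun hW x => Measure.map_apply hW measurableSet_Iic
  have hnonneg : ∀ {W : Ω → ℝ}, Measurable W → (∀ ω, 0 ≤ W ω) → ∀ᵐ x ∂(P.map W), 0 ≤ x :=
    fun hW hW0 => (ae_map_iff hW.aemeasurable measurableSet_Ici).2 (ae_of_all _ hW0)
  have h := tendsto_conv_Iic_div_rpow (hnonneg hXmeas hX0) (hnonneg hZmeas hZ0) hA hB ha hb
    (by simpa only [hlaw hXmeas] using hFX) (by simpa only [hlaw hZmeas] using hFZ)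
  rw [← hindep.map_add_eq_map_conv_map hXmeas hZmeas] at h
  simpa only [hlaw (hXmeas.add hZmeas), Pi.add_apply] using h
end
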